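/- arXiv:1911.04003 — 2 statements merged into one kernel-verified Lean document; each statement's English description precedes it below -/
import Mathlib

section
/- For a ∈ (0, √2/2), set m = (1 − 2a²)/(1 + 2a²), μ = √(1−2a²)/(2a), and t_a = (1/2)·arccosh(1/(2a²)). Then ∫₀^{t_a} 4 dt/√(1 − 2a² cosh(2t)) = (4/√(1+2a²)) · K(m), where K(m) = ∫₀^{π/2} dθ/√(1 − m sin²θ). -/
open Real

open MeasureTheory Set

/-- The inverse hyperbolic cosine (for `x ≥ 1`). -/
noncomputable def arcosh (x : ℝ) : ℝ := Real.log (x + Real.sqrt (x ^ 2 - 1))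

set_option maxHeartbeats 1000000 in
theorem period_integral_eq_ellipticK (a : ℝ) (ha : a ∈ Set.Ioo 0 (Real.sqrt 2 / 2)) :
    ∫ t in (0 : ℝ)..((1 / 2) * _root_.arcosh (1 / (2 * a ^ 2))),
        4 / Real.sqrt (1 - 2 * a ^ 2 * Real.cosh (2 * t)) =
      (4 / Real.sqrt (1 + 2 * a ^ 2)) *
        ∫ θ in (0 : ℝ)..(π / 2),
          1 / Real.sqrt (1 - ((1 - 2 * a ^ 2) / (1 + 2 * a ^ 2)) * Real.sin θ ^ 2) := by
  obtain ⟨ha0, ha1⟩ := ha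
  have hs2 : Real.sqrt 2 ^ 2 = 2 := Real.sq_sqrt (by norm_num)
  have ha2 : 2 * a ^ 2 < 1 := by nlinarith [Real.sqrt_nonneg 2]
  have hb0 : (0:ℝ) < 1 - 2 * a ^ 2 := by linarith
  have hc0 : (0:ℝ) < 1 + 2 * a ^ 2 := by positivity
  set b := Real.sqrt (1 - 2 * a ^ 2) with hbdef
  set c := Real.sqrt (1 + 2 * a ^ 2) with hcdef
  have hb2 : b ^ 2 = 1 - 2 * a ^ 2 := Real.sq_sqrt hb0.le
  have hc2 : c ^ 2 = 1 + 2 * a ^ 2 := Real.sq_sqrt hc0.le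
  have hbp : 0 < b := Real.sqrt_pos.2 hb0
  have hcp : 0 < c := Real.sqrt_pos.2 hc0
  set μ := b / (2 * a) with hμdef
  have hμp : 0 < μ := by positivity
  set T := Real.arsinh μ with hTdef
  have hT0 : 0 < T := Real.arsinh_pos_iff.2 hμp
  -- endpoint identity
  have hT : (1/2) * _root_.arcosh (1 / (2 * a ^ 2)) = T := by
    have h1 : (1/(2*a^2):ℝ)^2 - 1 = (b*c/(2*a^2))^2 := by
      field_simp; nlinarith [hb2, hc2]
    have h2 : Real.sqrt ((1/(2*a^2):ℝ)^2 - 1) = b*c/(2*a^2) := by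
      rw [h1, Real.sqrt_sq (by positivity)]
    have h3 : (1:ℝ) + (b/(2*a))^2 = (c/(2*a))^2 := by
      field_simp; nlinarith [hb2, hc2]
    have h5 : (1:ℝ)/(2*a^2) + b*c/(2*a^2) = (b/(2*a) + c/(2*a))^2 := by
      field_simp; nlinarith [hb2, hc2]
    rw [hTdef, hμdef, _root_.arcosh, Real.arsinh, h2, h3, Real.sqrt_sq (by positivity), h5,
      Real.log_pow]
    push_cast; ring
  -- the common middle integrand
  set M : ℝ → ℝ := fun θ => 4 / Real.sqrt (4*a^2 + (1-2*a^2) * Real.sin θ ^ 2) with hMdef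
  -- Step A : substitution t = arsinh (μ sin θ)
  have hπ2 : (0:ℝ) < π/2 := by positivity
  set f : ℝ → ℝ := fun θ => Real.arsinh (μ * Real.sin θ) with hfdef
  set f' : ℝ → ℝ := fun θ => (Real.sqrt (1 + (μ * Real.sin θ)^2))⁻¹ * (μ * Real.cos θ)
    with hf'def
  have hderiv : ∀ θ : ℝ, HasDerivAt f (f' θ) θ := by
    intro θ
    exact (Real.hasDerivAt_arsinh _).comp θ ((Real.hasDerivAt_sin θ).const_mul μ)
  have hmono : StrictMonoOn f (Icc 0 (π/2)) := by
    intro x hx y hy hxy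
    have hsub : Icc (0:ℝ) (π/2) ⊆ Icc (-(π/2)) (π/2) :=
      Icc_subset_Icc (by linarith) le_rfl
    have hsin := Real.strictMonoOn_sin (hsub hx) (hsub hy) hxy
    exact Real.arsinh_lt_arsinh.2 (mul_lt_mul_of_pos_left hsin hμp)
  have hf0 : f 0 = 0 := by simp [hfdef]
  have hfπ : f (π/2) = T := by simp [hfdef, hTdef]
  have hcont : ContinuousOn f (Icc 0 (π/2)) :=
    (Real.continuous_arsinh.comp (continuous_const.mul Real.continuous_sin)).continuousOn
  have himg : f '' Ioo 0 (π/2) = Ioo 0 T := by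
    apply Subset.antisymm
    · rintro _ ⟨θ, hθ, rfl⟩
      refine ⟨?_, ?_⟩
      · have := hmono (left_mem_Icc.2 hπ2.le) ⟨hθ.1.le, hθ.2.le⟩ hθ.1
        rwa [hf0] at this
      · have := hmono ⟨hθ.1.le, hθ.2.le⟩ (right_mem_Icc.2 hπ2.le) hθ.2
        rwa [hfπ] at this
    · have := intermediate_value_Ioo hπ2.le hcont
      rwa [hf0, hfπ] at this
  have hkey : ∀ θ ∈ Ioo (0:ℝ) (π/2),
      |f' θ| • (4 / Real.sqrt (1 - 2 * a ^ 2 * Real.cosh (2 * f θ))) = M θ := by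
    intro θ hθ
    have hcos : 0 < Real.cos θ := Real.cos_pos_of_mem_Ioo ⟨by linarith [hθ.1], hθ.2⟩
    have hq0 : 0 < 4*a^2 + (1-2*a^2) * Real.sin θ ^ 2 := by
      have : 0 ≤ (1-2*a^2) * Real.sin θ ^ 2 := mul_nonneg hb0.le (sq_nonneg _)
      nlinarith
    have e1 : 1 + (μ * Real.sin θ)^2
        = (Real.sqrt (4*a^2 + (1-2*a^2) * Real.sin θ ^ 2) / (2*a))^2 := by
      rw [div_pow, Real.sq_sqrt hq0.le, hμdef]
      field_simp
      nlinarith [hb2]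
    have e2 : Real.cosh (2 * Real.arsinh (μ * Real.sin θ))
        = 1 + 2 * (μ * Real.sin θ)^2 := by
      rw [Real.cosh_two_mul, Real.cosh_sq', Real.sinh_arsinh]; ring
    have hμb : (2*a)^2 * μ^2 = b^2 := by
      rw [hμdef]; field_simp
    have e3 : 1 - 2 * a ^ 2 * (1 + 2 * (μ * Real.sin θ)^2) = (b * Real.cos θ)^2 := by
      have hsc := Real.sin_sq_add_cos_sq θ
      linear_combination (-(Real.sin θ^2)) * hμb + (-(b^2)) * hsc + (-1) * hb2
    have hfθ : f θ = Real.arsinh (μ * Real.sin θ) := rfl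
    rw [smul_eq_mul, hfθ, e2, e3, Real.sqrt_sq (by positivity), hf'def]
    simp only []
    rw [e1, Real.sqrt_sq (by positivity)]
    rw [abs_of_nonneg (by positivity)]
    rw [hμdef, hMdef]
    have hsq : Real.sqrt (4*a^2 + (1-2*a^2) * Real.sin θ ^ 2) ≠ 0 :=
      ne_of_gt (Real.sqrt_pos.2 hq0)
    field_simp
  have stepA : ∫ t in (0:ℝ)..T, 4 / Real.sqrt (1 - 2 * a ^ 2 * Real.cosh (2 * t))
      = ∫ θ in (0:ℝ)..(π/2), M θ := by
    rw [intervalIntegral.integral_of_le hT0.le, integral_Ioc_eq_integral_Ioo, ← himg,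
      integral_image_eq_integral_abs_deriv_smul measurableSet_Ioo
        (fun x _ => (hderiv x).hasDerivWithinAt)
        ((hmono.mono Ioo_subset_Icc_self).injOn)]
    rw [setIntegral_congr_fun measurableSet_Ioo hkey]
    rw [← integral_Ioc_eq_integral_Ioo, ← intervalIntegral.integral_of_le hπ2.le]
  -- Step B : algebra + reflection θ ↦ π/2 - θ
  have stepB : (4 / c) * (∫ θ in (0:ℝ)..(π/2),
        1 / Real.sqrt (1 - ((1 - 2 * a ^ 2) / (1 + 2 * a ^ 2)) * Real.sin θ ^ 2))
      = ∫ θ in (0:ℝ)..(π/2), M θ := by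
    rw [← intervalIntegral.integral_const_mul]
    have h1 : ∀ θ : ℝ, (4/c) * (1 / Real.sqrt (1 - ((1-2*a^2)/(1+2*a^2)) * Real.sin θ ^ 2))
        = 4 / Real.sqrt (1 + 2*a^2 - (1-2*a^2) * Real.sin θ ^ 2) := by
      intro θ
      have hs1 : Real.sin θ ^ 2 ≤ 1 := Real.sin_sq_le_one θ
      have hs0 : 0 ≤ Real.sin θ ^ 2 := sq_nonneg _
      have hpos : 0 < 1 - ((1-2*a^2)/(1+2*a^2)) * Real.sin θ ^ 2 := by
        rw [div_mul_eq_mul_div, lt_sub_iff_add_lt, zero_add, div_lt_one hc0]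
        nlinarith
      have hdist : Real.sqrt (1 + 2*a^2 - (1-2*a^2) * Real.sin θ ^ 2)
          = c * Real.sqrt (1 - ((1-2*a^2)/(1+2*a^2)) * Real.sin θ ^ 2) := by
        rw [hcdef, ← Real.sqrt_mul hc0.le]
        congr 1
        field_simp
      rw [hdist, div_mul_div_comm, mul_one]
    have h1' : (fun θ => (4/c) * (1 / Real.sqrt (1 - ((1-2*a^2)/(1+2*a^2)) * Real.sin θ ^ 2)))
        = fun θ => 4 / Real.sqrt (1 + 2*a^2 - (1-2*a^2) * Real.sin θ ^ 2) := funext h1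
    rw [h1']
    have h2 : ∀ θ : ℝ, M (π/2 - θ) = 4 / Real.sqrt (1 + 2*a^2 - (1-2*a^2) * Real.sin θ ^ 2) := by
      intro θ
      rw [hMdef]
      simp only [Real.sin_pi_div_two_sub]
      congr 2
      nlinarith [Real.sin_sq_add_cos_sq θ]
    have := intervalIntegral.integral_comp_sub_left M (π/2) (a := 0) (b := π/2)
    rw [sub_zero, sub_self] at this
    rw [← this]
    exact (intervalIntegral.integral_congr (fun θ _ => (h2 θ))).symm
  rw [hT, stepA]; exact stepB.symm
end

section
/- For m ∈ (0,1), the complete elliptic integral of the first kind satisfies K(m) = (π/2)/AGM(√(1−m), 1). -/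
open Filter

/-- The AGM iteration: `agmPair α β n = (αₙ, βₙ)` where `αₙ₊₁ = √(αₙβₙ)`,
`βₙ₊₁ = (αₙ+βₙ)/2`, starting from `(α, β)`. -/
noncomputable def agmPair (α β : ℝ) : ℕ → ℝ × ℝ
  | 0 => (α, β)
  | n + 1 => (Real.sqrt ((agmPair α β n).1 * (agmPair α β n).2),
      ((agmPair α β n).1 + (agmPair α β n).2) / 2)

/-- The arithmetic-geometric mean: the (common) limit of the AGM iteration. -/
noncomputable def agm (α β : ℝ) : ℝ := limUnder atTop fun n => (agmPair α β n).1

open Real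

open MeasureTheory Set

noncomputable def gg (a b t : ℝ) : ℝ := (Real.sqrt ((t^2+a^2)*(t^2+b^2)))⁻¹

lemma gg_cont (a b : ℝ) (ha : 0 < a) (hb : 0 < b) : Continuous (gg a b) := by
  apply Continuous.inv₀
  · fun_prop
  · intro t
    have : 0 < (t^2+a^2)*(t^2+b^2) := by positivity
    positivity

lemma gg_integrable (a b : ℝ) (ha : 0 < a) (hb : 0 < b) : Integrable (gg a b) := by
  set c : ℝ := min 1 a ^ 2 * min 1 b ^ 2 with hc
  have hcpos : 0 < c := by positivity
  have key : ∀ t : ℝ, ‖gg a b t‖ ≤ (Real.sqrt c)⁻¹ * (1 + t^2)⁻¹ := by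
    intro t
    have h1 : min 1 a ^ 2 * (1 + t^2) ≤ t^2 + a^2 := by
      rcases min_cases 1 a with ⟨h, h'⟩ | ⟨h, h'⟩ <;> rw [h]
      · nlinarith
      · nlinarith [mul_nonneg (mul_nonneg (sub_nonneg.2 h'.le) (add_pos ha (by linarith : (0:ℝ) < 1+a)).le) (sq_nonneg t)]
    have h2 : min 1 b ^ 2 * (1 + t^2) ≤ t^2 + b^2 := by
      rcases min_cases 1 b with ⟨h, h'⟩ | ⟨h, h'⟩ <;> rw [h]
      · nlinarith
      · nlinarith [mul_nonneg (mul_nonneg (sub_nonneg.2 h'.le) (add_pos hb (by linarith : (0:ℝ) < 1+b)).le) (sq_nonneg t)]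
    have h3 : c * ((1+t^2)*(1+t^2)) ≤ (t^2+a^2)*(t^2+b^2) := by
      have := mul_le_mul h1 h2 (by positivity) (by positivity)
      nlinarith [this]
    have h4 : Real.sqrt (c * ((1+t^2)*(1+t^2))) ≤ Real.sqrt ((t^2+a^2)*(t^2+b^2)) :=
      Real.sqrt_le_sqrt h3
    have h5 : Real.sqrt (c * ((1+t^2)*(1+t^2))) = Real.sqrt c * (1+t^2) := by
      rw [Real.sqrt_mul hcpos.le, Real.sqrt_mul_self (by positivity)]
    have h6 : 0 < Real.sqrt c * (1+t^2) := by positivity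
    have : gg a b t ≤ (Real.sqrt c * (1+t^2))⁻¹ := by
      apply inv_anti₀ h6
      rw [← h5]; exact h4
    have hnn : 0 ≤ gg a b t := by
      unfold gg; positivity
    rw [Real.norm_eq_abs, abs_of_nonneg hnn, ← mul_inv]
    exact this
  apply Integrable.mono (integrable_inv_one_add_sq.const_mul ((Real.sqrt c)⁻¹))
    ((gg_cont a b ha hb).aestronglyMeasurable)
  filter_upwards with t
  rw [Real.norm_eq_abs (((Real.sqrt c)⁻¹ * _)), abs_of_nonneg (by positivity)]
  exact key t

noncomputable def Jint (a b : ℝ) : ℝ := ∫ t in Ioi (0:ℝ), gg a b t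

lemma Jint_symm (a b : ℝ) : Jint a b = Jint b a := by
  unfold Jint gg
  congr 1; ext t; rw [mul_comm]

noncomputable def Ith (a b : ℝ) : ℝ :=
  ∫ θ in Ioo (0:ℝ) (π/2), (Real.sqrt (a^2 * Real.cos θ^2 + b^2 * Real.sin θ^2))⁻¹

lemma image_btan (b : ℝ) (hb : 0 < b) :
    (fun θ => b * Real.tan θ) '' Ioo (0:ℝ) (π/2) = Ioi (0:ℝ) := by
  ext y
  constructor
  · rintro ⟨θ, hθ, rfl⟩
    exact mul_pos hb (Real.tan_pos_of_pos_of_lt_pi_div_two hθ.1 hθ.2)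
  · intro hy
    refine ⟨Real.arctan (y / b), ⟨?_, Real.arctan_lt_pi_div_two _⟩, ?_⟩
    · have := Real.arctan_strictMono (div_pos hy hb)
      rwa [Real.arctan_zero] at this
    · show b * Real.tan (Real.arctan (y / b)) = y
      rw [Real.tan_arctan]; field_simp
lemma mem_pi2 {θ : ℝ} (hθ : θ ∈ Ioo (0:ℝ) (π/2)) : θ ∈ Ioo (-(π/2)) (π/2) :=
  ⟨by linarith [hθ.1, pi_div_two_pos], hθ.2⟩

lemma Ith_eq_J (a b : ℝ) (ha : 0 < a) (hb : 0 < b) : Ith a b = Jint a b := by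
  unfold Ith Jint
  rw [← image_btan b hb,
    integral_image_eq_integral_abs_deriv_smul measurableSet_Ioo
      (f' := fun θ => b * (1 / Real.cos θ ^ 2))
      (fun θ hθ => (((Real.hasDerivAt_tan
        (Real.cos_pos_of_mem_Ioo (mem_pi2 hθ)).ne').const_mul b)).hasDerivWithinAt)
      ?_ (gg a b)]
  · apply setIntegral_congr_fun measurableSet_Ioo
    intro θ hθ
    have hc : 0 < Real.cos θ := Real.cos_pos_of_mem_Ioo (mem_pi2 hθ)
    have h1 : Real.sin θ ^ 2 + Real.cos θ ^ 2 = 1 := Real.sin_sq_add_cos_sq θ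
    have e1 : ((b*Real.tan θ)^2+a^2)*((b*Real.tan θ)^2+b^2)
        = (a^2*Real.cos θ^2+b^2*Real.sin θ^2) * (b * (1/Real.cos θ^2))^2 := by
      rw [Real.tan_eq_sin_div_cos]
      field_simp
      linear_combination (b^2*Real.sin θ^2 + Real.cos θ^2*a^2) * h1
    have hX : 0 ≤ a^2*Real.cos θ^2+b^2*Real.sin θ^2 := by positivity
    have hy : 0 < b * (1/Real.cos θ^2) := by positivity
    simp only [gg]
    rw [abs_of_pos hy, smul_eq_mul, e1, Real.sqrt_mul hX, Real.sqrt_sq hy.le]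
    have hXpos : 0 < a^2*Real.cos θ^2+b^2*Real.sin θ^2 := by
      have : 0 < a^2*Real.cos θ^2 := by positivity
      nlinarith [sq_nonneg (b*Real.sin θ)]
    have h5 : 0 < Real.sqrt (a^2*Real.cos θ^2+b^2*Real.sin θ^2) := Real.sqrt_pos.2 hXpos
    field_simp
  · intro x hx y hy hxy
    have := Real.strictMonoOn_tan.injOn (mem_pi2 hx) (mem_pi2 hy)
    exact this (mul_left_cancel₀ hb.ne' hxy)

lemma integral_gg_univ (a b : ℝ) (ha : 0 < a) (hb : 0 < b) :
    ∫ t, gg a b t = 2 * Jint a b := by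
  have heven : ∀ t, gg a b (-t) = gg a b t := by
    intro t; simp [gg, neg_pow]
  have hint := gg_integrable a b ha hb
  rw [← intervalIntegral.integral_Iic_add_Ioi (b := (0:ℝ)) hint.integrableOn hint.integrableOn]
  have : ∫ t in Iic (0:ℝ), gg a b t = Jint a b := by
    have h := integral_comp_neg_Iic (0:ℝ) (gg a b)
    simp only [heven, neg_zero] at h
    rw [h]; rfl
  rw [this]; unfold Jint; ring

lemma J_step (a b : ℝ) (ha : 0 < a) (hb : 0 < b) :
    Jint ((a+b)/2) (Real.sqrt (a*b)) = Jint a b := by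
  set f : ℝ → ℝ := fun t => (t - a*b/t)/2 with hf
  have hab : 0 < a*b := mul_pos ha hb
  have hb1 : Real.sqrt (a*b) ^ 2 = a*b := Real.sq_sqrt hab.le
  have ha1 : (0:ℝ) < (a+b)/2 := by linarith
  have hb1' : 0 < Real.sqrt (a*b) := Real.sqrt_pos.2 hab
  have hderiv : ∀ t ∈ Ioi (0:ℝ), HasDerivWithinAt f ((1 + a*b/t^2)/2) (Ioi 0) t := by
    intro t ht
    have ht' : t ≠ 0 := (ne_of_gt ht)
    have h1 : HasDerivAt (fun t : ℝ => (t - a*b/t)/2) ((1 - a*b*(-(t^2)⁻¹))/2) t := by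
      simpa [div_eq_mul_inv] using (((hasDerivAt_id t).sub ((hasDerivAt_inv ht').const_mul (a*b))).div_const 2)
    have : (1 - a*b*(-(t^2)⁻¹))/2 = (1 + a*b/t^2)/2 := by field_simp; ring
    rw [this] at h1
    exact h1.hasDerivWithinAt
  have hinj : InjOn f (Ioi 0) := by
    intro s hs t ht hst
    simp only [hf] at hst
    have hs' : (0:ℝ) < s := hs
    have ht' : (0:ℝ) < t := ht
    have h2 : (s - t) * (1 + a*b/(s*t)) = 0 := by
      field_simp at hst ⊢
      nlinarith [hst]
    have h3 : 0 < 1 + a*b/(s*t) := by positivity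
    have := mul_eq_zero.1 h2
    rcases this with h | h
    · linarith
    · linarith
  have himg : f '' Ioi 0 = univ := by
    apply eq_univ_of_forall
    intro y
    set t := y + Real.sqrt (y^2 + a*b) with htdef
    have hsq : Real.sqrt (y^2 + a*b) ^ 2 = y^2 + a*b := Real.sq_sqrt (by positivity)
    have hgt : |y| < Real.sqrt (y^2 + a*b) := by
      rw [← Real.sqrt_sq_eq_abs]
      exact Real.sqrt_lt_sqrt (sq_nonneg y) (by linarith)
    have htpos : 0 < t := by
      have := neg_abs_le y
      simp only [htdef]; linarith
    refine ⟨t, htpos, ?_⟩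
    simp only [hf]
    rw [div_eq_iff (by norm_num : (2:ℝ) ≠ 0)]
    rw [sub_eq_iff_eq_add]
    field_simp
    rw [htdef]
    linear_combination hsq
  have key := integral_image_eq_integral_abs_deriv_smul measurableSet_Ioi hderiv hinj
    (gg ((a+b)/2) (Real.sqrt (a*b)))
  rw [himg] at key
  have hrhs : ∫ t in Ioi (0:ℝ), |(1 + a*b/t^2)/2| • gg ((a+b)/2) (Real.sqrt (a*b)) (f t)
      = 2 * Jint a b := by
    rw [show 2 * Jint a b = ∫ t in Ioi (0:ℝ), 2 * gg a b t by
      unfold Jint; rw [MeasureTheory.integral_const_mul]]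
    apply setIntegral_congr_fun measurableSet_Ioi
    intro t ht
    dsimp only
    have ht' : (0:ℝ) < t := ht
    have hfpos : 0 < (1 + a*b/t^2)/2 := by positivity
    have hQ : (0:ℝ) < (t^2+a^2)*(t^2+b^2) := by positivity
    have e1 : (f t^2 + ((a+b)/2)^2) * (f t^2 + Real.sqrt (a*b)^2)
        = ((t^2+a^2)*(t^2+b^2)) * ((t^2+a*b)/(4*t^2))^2 := by
      rw [hb1]; simp only [hf]; field_simp; ring
    have hpos2 : (0:ℝ) < (t^2+a*b)/(4*t^2) := by positivity
    rw [abs_of_pos hfpos, smul_eq_mul]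
    unfold gg
    rw [e1, Real.sqrt_mul hQ.le, Real.sqrt_sq hpos2.le]
    have hsq : 0 < Real.sqrt ((t^2+a^2)*(t^2+b^2)) := Real.sqrt_pos.2 hQ
    rw [mul_inv]
    field_simp
    ring
  rw [hrhs] at key
  have huniv : ∫ t, gg ((a+b)/2) (Real.sqrt (a*b)) t = 2 * Jint ((a+b)/2) (Real.sqrt (a*b)) :=
    integral_gg_univ _ _ ha1 hb1'
  have : (2:ℝ) * Jint ((a+b)/2) (Real.sqrt (a*b)) = 2 * Jint a b := by
    rw [← huniv, ← key]
    simp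
  linarith

lemma ith_integrand_cont (a b : ℝ) (ha : 0 < a) (hb : 0 < b) :
    Continuous (fun θ => (Real.sqrt (a^2 * Real.cos θ^2 + b^2 * Real.sin θ^2))⁻¹) := by
  apply Continuous.inv₀
  · fun_prop
  · intro θ
    have h1 : Real.sin θ ^ 2 + Real.cos θ ^ 2 = 1 := Real.sin_sq_add_cos_sq θ
    have h3 : 0 < min (a^2) (b^2) := lt_min (pow_pos ha 2) (pow_pos hb 2)
    have h2 : 0 < a^2 * Real.cos θ^2 + b^2 * Real.sin θ^2 := by
      nlinarith [mul_le_mul_of_nonneg_right (min_le_left (a^2) (b^2)) (sq_nonneg (Real.cos θ)),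
        mul_le_mul_of_nonneg_right (min_le_right (a^2) (b^2)) (sq_nonneg (Real.sin θ))]
    positivity

lemma ith_integrableOn (a b : ℝ) (ha : 0 < a) (hb : 0 < b) :
    IntegrableOn (fun θ => (Real.sqrt (a^2 * Real.cos θ^2 + b^2 * Real.sin θ^2))⁻¹)
      (Ioo (0:ℝ) (π/2)) := by
  exact ((ith_integrand_cont a b ha hb).integrableOn_Icc (a := 0) (b := π/2)).mono_set
    Ioo_subset_Icc_self

lemma integral_const_Ioo (c : ℝ) : ∫ _θ in Ioo (0:ℝ) (π/2), c = (π/2) * c := by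
  rw [setIntegral_const]
  rw [measureReal_def, Real.volume_Ioo]
  rw [ENNReal.toReal_ofReal (by rw [sub_zero]; positivity : (0:ℝ) ≤ π/2 - 0)]
  simp [smul_eq_mul]

lemma Ith_bounds (a b : ℝ) (ha : 0 < a) (hab : a ≤ b) :
    π/2 * b⁻¹ ≤ Ith a b ∧ Ith a b ≤ π/2 * a⁻¹ := by
  have hb : 0 < b := lt_of_lt_of_le ha hab
  have hpt : ∀ θ : ℝ, b⁻¹ ≤ (Real.sqrt (a^2 * Real.cos θ^2 + b^2 * Real.sin θ^2))⁻¹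
      ∧ (Real.sqrt (a^2 * Real.cos θ^2 + b^2 * Real.sin θ^2))⁻¹ ≤ a⁻¹ := by
    intro θ
    have h1 : Real.sin θ ^ 2 + Real.cos θ ^ 2 = 1 := Real.sin_sq_add_cos_sq θ
    have hab2 : a^2 ≤ b^2 := by nlinarith
    have e1 : a^2 * Real.cos θ^2 + b^2 * Real.sin θ^2 - a^2 = (b^2-a^2) * Real.sin θ^2 := by
      linear_combination a^2 * h1
    have e2 : b^2 - (a^2 * Real.cos θ^2 + b^2 * Real.sin θ^2) = (b^2-a^2) * Real.cos θ^2 := by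
      linear_combination (-(b^2)) * h1
    have hnn : (0:ℝ) ≤ b^2 - a^2 := by linarith
    have hle1 : a^2 ≤ a^2 * Real.cos θ^2 + b^2 * Real.sin θ^2 := by
      nlinarith [mul_nonneg hnn (sq_nonneg (Real.sin θ))]
    have hle2 : a^2 * Real.cos θ^2 + b^2 * Real.sin θ^2 ≤ b^2 := by
      nlinarith [mul_nonneg hnn (sq_nonneg (Real.cos θ))]
    have hs1 : a ≤ Real.sqrt (a^2 * Real.cos θ^2 + b^2 * Real.sin θ^2) :=
      le_trans (le_of_eq (Real.sqrt_sq ha.le).symm) (Real.sqrt_le_sqrt hle1)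
    have hs2 : Real.sqrt (a^2 * Real.cos θ^2 + b^2 * Real.sin θ^2) ≤ b :=
      (Real.sqrt_le_sqrt hle2).trans_eq (Real.sqrt_sq hb.le)
    constructor
    · exact inv_anti₀ (lt_of_lt_of_le ha hs1) hs2
    · exact inv_anti₀ ha hs1
  constructor
  · rw [← integral_const_Ioo b⁻¹]
    apply setIntegral_mono_on (integrableOn_const (by rw [Real.volume_Ioo]; exact ENNReal.ofReal_ne_top))
      (ith_integrableOn a b ha hb) measurableSet_Ioo
    intro θ _; exact (hpt θ).1
  · rw [← integral_const_Ioo a⁻¹]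
    apply setIntegral_mono_on (ith_integrableOn a b ha hb)
      (integrableOn_const (by rw [Real.volume_Ioo]; exact ENNReal.ofReal_ne_top))
      measurableSet_Ioo
    intro θ _; exact (hpt θ).2

section AGM
variable {α β : ℝ} (hα : 0 < α) (hβ : 0 < β)
include hα hβ

lemma agm_pos : ∀ n, 0 < (agmPair α β n).1 ∧ 0 < (agmPair α β n).2 := by
  intro n
  induction n with
  | zero => exact ⟨hα, hβ⟩
  | succ n ih =>
    refine ⟨Real.sqrt_pos.2 (mul_pos ih.1 ih.2), by simp only [agmPair]; linarith [ih.1, ih.2]⟩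

lemma agm_le (n : ℕ) : (agmPair α β (n+1)).1 ≤ (agmPair α β (n+1)).2 := by
  obtain ⟨h1, h2⟩ := agm_pos hα hβ n
  show Real.sqrt ((agmPair α β n).1 * (agmPair α β n).2) ≤ ((agmPair α β n).1 + (agmPair α β n).2)/2
  set x := (agmPair α β n).1
  set y := (agmPair α β n).2
  have hxy : Real.sqrt (x*y) = Real.sqrt x * Real.sqrt y := Real.sqrt_mul h1.le y
  have hx := Real.sq_sqrt h1.le
  have hy := Real.sq_sqrt h2.le
  nlinarith [sq_nonneg (Real.sqrt x - Real.sqrt y)]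

lemma agm_A_mono (n : ℕ) : (agmPair α β (n+1)).1 ≤ (agmPair α β (n+2)).1 := by
  obtain ⟨h1, h2⟩ := agm_pos hα hβ (n+1)
  show _ ≤ Real.sqrt ((agmPair α β (n+1)).1 * (agmPair α β (n+1)).2)
  have hle := agm_le hα hβ n
  calc (agmPair α β (n+1)).1 = Real.sqrt ((agmPair α β (n+1)).1 ^ 2) := (Real.sqrt_sq h1.le).symm
    _ ≤ _ := Real.sqrt_le_sqrt (by nlinarith)

lemma agm_A_ge (n : ℕ) : (agmPair α β 1).1 ≤ (agmPair α β (n+1)).1 := by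
  induction n with
  | zero => exact le_refl _
  | succ n ih => exact le_trans ih (agm_A_mono hα hβ n)

lemma agm_B_anti (n : ℕ) : (agmPair α β (n+2)).2 ≤ (agmPair α β (n+1)).2 := by
  have hle := agm_le hα hβ n
  show ((agmPair α β (n+1)).1 + (agmPair α β (n+1)).2)/2 ≤ _
  linarith [agm_le hα hβ n]

lemma agm_B_eq (n : ℕ) :
    (agmPair α β (n+1)).1 = 2 * (agmPair α β (n+2)).2 - (agmPair α β (n+1)).2 := by
  show _ = 2 * (((agmPair α β (n+1)).1 + (agmPair α β (n+1)).2)/2) - _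
  ring

noncomputable def agmLimit (α β : ℝ) : ℝ := ⨅ n : ℕ, (agmPair α β (n+1)).2

lemma agm_B_tendsto : Tendsto (fun n => (agmPair α β (n+1)).2) atTop (nhds (agmLimit α β)) := by
  apply tendsto_atTop_ciInf
  · intro i j hij
    induction hij with
    | refl => exact le_refl _
    | step h ih => exact le_trans (agm_B_anti hα hβ _) ih
  · refine ⟨(agmPair α β 1).1, ?_⟩
    rintro x ⟨n, rfl⟩
    exact le_trans (agm_A_ge hα hβ n) (agm_le hα hβ n)

lemma agm_limit_pos : 0 < agmLimit α β := by
  have h1 : (agmPair α β 1).1 ≤ agmLimit α β := by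
    apply le_ciInf
    intro n
    exact le_trans (agm_A_ge hα hβ n) (agm_le hα hβ n)
  exact lt_of_lt_of_le (agm_pos hα hβ 1).1 h1

lemma agm_A_tendsto : Tendsto (fun n => (agmPair α β (n+1)).1) atTop (nhds (agmLimit α β)) := by
  have hB := agm_B_tendsto hα hβ
  have hB2 : Tendsto (fun n => (agmPair α β (n+2)).2) atTop (nhds (agmLimit α β)) := by
    exact (tendsto_add_atTop_iff_nat 1).2 hB
  have : Tendsto (fun n => 2 * (agmPair α β (n+2)).2 - (agmPair α β (n+1)).2) atTop
      (nhds (2 * agmLimit α β - agmLimit α β)) := (hB2.const_mul 2).sub hB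
  rw [show 2 * agmLimit α β - agmLimit α β = agmLimit α β by ring] at this
  apply this.congr
  intro n
  exact (agm_B_eq hα hβ n).symm

lemma agm_A_tendsto' : Tendsto (fun n => (agmPair α β n).1) atTop (nhds (agmLimit α β)) :=
  (tendsto_add_atTop_iff_nat 1).1 (agm_A_tendsto hα hβ)

lemma agm_eq_limit : agm α β = agmLimit α β :=
  (agm_A_tendsto' hα hβ).limUnder_eq

end AGM

theorem gauss_agm_identity (m : ℝ) (hm : m ∈ Set.Ioo (0 : ℝ) 1) :
    ∫ θ in (0 : ℝ)..(π / 2), 1 / Real.sqrt (1 - m * Real.sin θ ^ 2) =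
      (π / 2) / agm (Real.sqrt (1 - m)) 1 := by
  obtain ⟨hm0, hm1⟩ := hm
  set α := Real.sqrt (1 - m) with hαdef
  have h1m : (0:ℝ) < 1 - m := by linarith
  have hα : 0 < α := Real.sqrt_pos.2 h1m
  have hα2 : α ^ 2 = 1 - m := Real.sq_sqrt h1m.le
  have hβ : (0:ℝ) < 1 := one_pos
  set M := agmLimit α 1 with hMdef
  have hM : 0 < M := agm_limit_pos hα hβ
  -- invariance
  have hinv : ∀ n, Jint (agmPair α 1 n).1 (agmPair α 1 n).2 = Jint α 1 := by
    intro n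
    induction n with
    | zero => rfl
    | succ n ih =>
      obtain ⟨h1, h2⟩ := agm_pos hα hβ n
      calc Jint (agmPair α 1 (n+1)).1 (agmPair α 1 (n+1)).2
          = Jint (((agmPair α 1 n).1 + (agmPair α 1 n).2)/2)
              (Real.sqrt ((agmPair α 1 n).1 * (agmPair α 1 n).2)) := Jint_symm _ _
        _ = Jint (agmPair α 1 n).1 (agmPair α 1 n).2 := J_step _ _ h1 h2
        _ = Jint α 1 := ih
  -- bounds
  have hbnd : ∀ n : ℕ, π/2 * ((agmPair α 1 (n+1)).2)⁻¹ ≤ Jint α 1 ∧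
      Jint α 1 ≤ π/2 * ((agmPair α 1 (n+1)).1)⁻¹ := by
    intro n
    obtain ⟨h1, h2⟩ := agm_pos hα hβ (n+1)
    have hle := agm_le hα hβ n
    have hb := Ith_bounds _ _ h1 hle
    rw [Ith_eq_J _ _ h1 h2, hinv (n+1)] at hb
    exact hb
  -- limits of the bounds
  have htB : Tendsto (fun n => π/2 * ((agmPair α 1 (n+1)).2)⁻¹) atTop (nhds (π/2 * M⁻¹)) :=
    ((agm_B_tendsto hα hβ).inv₀ hM.ne').const_mul _
  have htA : Tendsto (fun n => π/2 * ((agmPair α 1 (n+1)).1)⁻¹) atTop (nhds (π/2 * M⁻¹)) :=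
    ((agm_A_tendsto hα hβ).inv₀ hM.ne').const_mul _
  have hJ : Jint α 1 = π/2 * M⁻¹ := by
    have hle1 : π/2 * M⁻¹ ≤ Jint α 1 :=
      le_of_tendsto htB (Eventually.of_forall fun n => (hbnd n).1)
    have hle2 : Jint α 1 ≤ π/2 * M⁻¹ :=
      ge_of_tendsto htA (Eventually.of_forall fun n => (hbnd n).2)
    linarith
  -- rewrite the LHS integral as Ith 1 α
  have hLHS : (∫ θ in (0 : ℝ)..(π / 2), 1 / Real.sqrt (1 - m * Real.sin θ ^ 2)) = Ith 1 α := by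
    rw [intervalIntegral.integral_of_le pi_div_two_pos.le, MeasureTheory.integral_Ioc_eq_integral_Ioo]
    unfold Ith
    apply setIntegral_congr_fun measurableSet_Ioo
    intro θ _
    dsimp only
    rw [one_div]
    congr 2
    have h1 : Real.sin θ ^ 2 + Real.cos θ ^ 2 = 1 := Real.sin_sq_add_cos_sq θ
    rw [hα2]
    linear_combination (-1 : ℝ) * h1
  rw [hLHS, Ith_eq_J 1 α one_pos hα, Jint_symm, hJ, agm_eq_limit hα hβ, ← hMdef]
  field_simp
end
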